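/- arXiv:2509.20206 — 5 statements merged into one kernel-verified Lean document; each statement's English description precedes it below -/
import Mathlib

section
/- (Proposition 1: non-overlap bounds on the ATE.) For every trimming threshold c ∈ [0, 1/2], the average treatment effect satisfies L(c) ≤ E[Y¹ − Y⁰] ≤ U(c). In particular, the ATE is bracketed by identified quantities even though the overlap assumption 0 < π < 1 a.s. is not imposed. -/
open MeasureTheory ProbabilityTheory

open Set in
lemma my_int_bdd {α : Type*} [MeasurableSpace α] (μ : Measure α) [IsFiniteMeasure μ]
    {f : α → ℝ} (hf : AEStronglyMeasurable f μ) (h : ∀ x, |f x| ≤ 1) : Integrable f μ :=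
  Integrable.mono' (integrable_const 1) hf (Filter.Eventually.of_forall fun x => by
    simpa [Real.norm_eq_abs] using h x)

lemma my_ae_indepFun {Ω : Type*} [mΩ : MeasurableSpace Ω] [StandardBorelSpace Ω]
    (P : Measure Ω) [IsProbabilityMeasure P]
    {f g : Ω → ℝ} (hf : Measurable f) (hg : Measurable g)
    (m' : MeasurableSpace Ω) (hm' : m' ≤ mΩ)
    (h : CondIndepFun m' hm' f g P) :
    ∀ᵐ ω ∂P, IndepFun f g (condExpKernel (mΩ := mΩ) P m' ω) := by
  have h2 : Kernel.IndepFun f g (condExpKernel (mΩ := mΩ) P m') (P.trim hm') := h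
  have h' := Kernel.indepFun_iff_measure_inter_preimage_eq_mul.mp h2
  have hae : ∀ᵐ ω ∂(P.trim hm'), ∀ q r : ℚ,
      condExpKernel (mΩ := mΩ) P m' ω (f ⁻¹' Set.Iic (q : ℝ) ∩ g ⁻¹' Set.Iic (r : ℝ)) =
      condExpKernel (mΩ := mΩ) P m' ω (f ⁻¹' Set.Iic (q : ℝ)) *
        condExpKernel (mΩ := mΩ) P m' ω (g ⁻¹' Set.Iic (r : ℝ)) := by
    rw [MeasureTheory.ae_all_iff]
    intro q
    rw [MeasureTheory.ae_all_iff]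
    intro r
    exact h' _ _ measurableSet_Iic measurableSet_Iic
  filter_upwards [ae_of_ae_trim hm' hae] with ω hω
  have hreal : (Real.measurableSpace : MeasurableSpace ℝ) =
      MeasurableSpace.generateFrom (⋃ a : ℚ, {Set.Iic (a : ℝ)}) := by
    rw [← Real.borel_eq_generateFrom_Iic_rat]; exact BorelSpace.measurable_eq
  rw [IndepFun_iff_Indep]
  refine IndepSets.indep hf.comap_le hg.comap_le
    (Real.isPiSystem_Iic_rat.comap f) (Real.isPiSystem_Iic_rat.comap g) ?_ ?_ ?_
  · rw [hreal, MeasurableSpace.comap_generateFrom]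
    rfl
  · rw [hreal, MeasurableSpace.comap_generateFrom]
    rfl
  · rintro _ _ ⟨s, hs, rfl⟩ ⟨t, ht, rfl⟩
    simp only [Set.mem_iUnion, Set.mem_singleton_iff] at hs ht
    obtain ⟨q, rfl⟩ := hs
    obtain ⟨r, rfl⟩ := ht
    exact MeasureTheory.ae_of_all _ fun _ => hω q r

/-- **Proposition 1: non-overlap bounds on the ATE.**
Under consistency and conditional exchangeability (but without assuming overlap),
for every trimming threshold `c ∈ [0, 1/2]` the average treatment effect satisfies
`L(c) ≤ E[Y¹ − Y⁰] ≤ U(c)`, where `ψ(c) = E[μ₁·1{π > c} − μ₀·1{π < 1−c}]`,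
`L(c) = ψ(c) − P(π ≥ 1−c)` and `U(c) = ψ(c) + P(π ≤ c)`. -/
theorem nonoverlap_bounds_on_ate
    {Ω : Type*} [MeasurableSpace Ω] [StandardBorelSpace Ω] [Nonempty Ω]
    (P : Measure Ω) [IsProbabilityMeasure P]
    {𝓧 : Type*} [MeasurableSpace 𝓧] [StandardBorelSpace 𝓧]
    (X : Ω → 𝓧) (hX : Measurable X)
    (A : Ω → ℝ) (hA : Measurable A) (hA01 : ∀ ω, A ω = 0 ∨ A ω = 1)
    (Y0 Y1 : Ω → ℝ) (hY0meas : Measurable Y0) (hY1meas : Measurable Y1)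
    (hY0b : ∀ ω, Y0 ω ∈ Set.Icc (0 : ℝ) 1) (hY1b : ∀ ω, Y1 ω ∈ Set.Icc (0 : ℝ) 1)
    (Y : Ω → ℝ) (hY : ∀ ω, Y ω = A ω * Y1 ω + (1 - A ω) * Y0 ω)
    (π : Ω → ℝ)
    (hπmeas : Measurable[MeasurableSpace.comap X inferInstance] π)
    (hπver : π =ᵐ[P] P[A | MeasurableSpace.comap X inferInstance])
    (hπb : ∀ ω, π ω ∈ Set.Icc (0 : ℝ) 1)
    -- conditional exchangeability
    (hcomap_le : MeasurableSpace.comap X inferInstance ≤ ‹MeasurableSpace Ω›)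
    (hexch1 : CondIndepFun (MeasurableSpace.comap X inferInstance) hcomap_le Y1 A P)
    (hexch0 : CondIndepFun (MeasurableSpace.comap X inferInstance) hcomap_le Y0 A P)
    -- outcome regressions
    (g1 g0 : Ω → ℝ)
    (hg1meas : Measurable[MeasurableSpace.comap X inferInstance] g1)
    (hg0meas : Measurable[MeasurableSpace.comap X inferInstance] g0)
    (hg1ver : g1 =ᵐ[P] P[fun ω => A ω * Y ω | MeasurableSpace.comap X inferInstance])
    (hg0ver : g0 =ᵐ[P] P[fun ω => (1 - A ω) * Y ω | MeasurableSpace.comap X inferInstance])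
    (μ1 μ0 : Ω → ℝ)
    (hμ1 : ∀ ω, μ1 ω = if 0 < π ω then g1 ω / π ω else 0)
    (hμ0 : ∀ ω, μ0 ω = if π ω < 1 then g0 ω / (1 - π ω) else 0)
    (c : ℝ) (hc : c ∈ Set.Icc (0 : ℝ) (1 / 2))
    -- the trimmed effect and the lower and upper bounds
    (ψ L U : ℝ)
    (hψ : ψ = ∫ ω, ({ω' | c < π ω'}.indicator μ1 ω - {ω' | π ω' < 1 - c}.indicator μ0 ω) ∂P)
    (hL : L = ψ - (P {ω | 1 - c ≤ π ω}).toReal)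
    (hU : U = ψ + (P {ω | π ω ≤ c}).toReal) :
    L ≤ ∫ ω, (Y1 ω - Y0 ω) ∂P ∧ ∫ ω, (Y1 ω - Y0 ω) ∂P ≤ U := by
  classical
  have hπM : Measurable π := hπmeas.mono hcomap_le le_rfl
  have hs1 : MeasurableSet {ω | c < π ω} := measurableSet_lt measurable_const hπM
  have hs2 : MeasurableSet {ω | π ω < 1 - c} := measurableSet_lt hπM measurable_const
  have hs3 : MeasurableSet {ω | π ω ≤ c} := measurableSet_le hπM measurable_const
  have hs4 : MeasurableSet {ω | 1 - c ≤ π ω} := measurableSet_le measurable_const hπM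
  have hAb : ∀ ω, |A ω| ≤ 1 := fun ω => by rcases hA01 ω with h | h <;> simp [h]
  have hY1b' : ∀ ω, |Y1 ω| ≤ 1 := fun ω =>
    abs_le.2 ⟨by linarith [(hY1b ω).1], (hY1b ω).2⟩
  have hY0b' : ∀ ω, |Y0 ω| ≤ 1 := fun ω =>
    abs_le.2 ⟨by linarith [(hY0b ω).1], (hY0b ω).2⟩
  set ν1 : Ω → ℝ := fun ω =>
    ∫ y, Y1 y ∂(condExpKernel P (MeasurableSpace.comap X inferInstance) ω) with hν1def
  set ν0 : Ω → ℝ := fun ω =>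
    ∫ y, Y0 y ∂(condExpKernel P (MeasurableSpace.comap X inferInstance) ω) with hν0def
  -- integrability over P
  have intY1 : Integrable Y1 P := my_int_bdd P hY1meas.aestronglyMeasurable hY1b'
  have intY0 : Integrable Y0 P := my_int_bdd P hY0meas.aestronglyMeasurable hY0b'
  have intA : Integrable A P := my_int_bdd P hA.aestronglyMeasurable hAb
  have intAY1 : Integrable (fun ω => A ω * Y1 ω) P :=
    my_int_bdd P (hA.mul hY1meas).aestronglyMeasurable (fun ω => by
      rw [abs_mul]; exact mul_le_one₀ (hAb ω) (abs_nonneg _) (hY1b' ω))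
  have h1Ab : ∀ ω, |1 - A ω| ≤ 1 := fun ω => by rcases hA01 ω with h | h <;> simp [h]
  have int1AY0 : Integrable (fun ω => (1 - A ω) * Y0 ω) P :=
    my_int_bdd P ((measurable_const.sub hA).mul hY0meas).aestronglyMeasurable (fun ω => by
      rw [abs_mul]; exact mul_le_one₀ (h1Ab ω) (abs_nonneg _) (hY0b' ω))
  -- pointwise bounds on ν
  have hν1b : ∀ ω, ν1 ω ∈ Set.Icc (0 : ℝ) 1 := by
    intro ω
    have hP : IsProbabilityMeasure
        (condExpKernel P (MeasurableSpace.comap X inferInstance) ω) := inferInstance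
    constructor
    · exact integral_nonneg fun y => (hY1b y).1
    · calc ∫ y, Y1 y ∂(condExpKernel P (MeasurableSpace.comap X inferInstance) ω)
          ≤ ∫ _, (1 : ℝ) ∂(condExpKernel P (MeasurableSpace.comap X inferInstance) ω) :=
            integral_mono (my_int_bdd _ hY1meas.aestronglyMeasurable hY1b')
              (integrable_const 1) (fun y => (hY1b y).2)
        _ = 1 := by simp
  have hν0b : ∀ ω, ν0 ω ∈ Set.Icc (0 : ℝ) 1 := by
    intro ω
    have hP : IsProbabilityMeasure
        (condExpKernel P (MeasurableSpace.comap X inferInstance) ω) := inferInstance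
    constructor
    · exact integral_nonneg fun y => (hY0b y).1
    · calc ∫ y, Y0 y ∂(condExpKernel P (MeasurableSpace.comap X inferInstance) ω)
          ≤ ∫ _, (1 : ℝ) ∂(condExpKernel P (MeasurableSpace.comap X inferInstance) ω) :=
            integral_mono (my_int_bdd _ hY0meas.aestronglyMeasurable hY0b')
              (integrable_const 1) (fun y => (hY0b y).2)
        _ = 1 := by simp
  have hν1b' : ∀ ω, |ν1 ω| ≤ 1 := fun ω =>
    abs_le.2 ⟨by linarith [(hν1b ω).1], (hν1b ω).2⟩
  have hν0b' : ∀ ω, |ν0 ω| ≤ 1 := fun ω =>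
    abs_le.2 ⟨by linarith [(hν0b ω).1], (hν0b ω).2⟩
  have hν1sm : AEStronglyMeasurable ν1 P :=
    hY1meas.aestronglyMeasurable.integral_condExpKernel
  have hν0sm : AEStronglyMeasurable ν0 P :=
    hY0meas.aestronglyMeasurable.integral_condExpKernel
  have intν1 : Integrable ν1 P := my_int_bdd P hν1sm hν1b'
  have intν0 : Integrable ν0 P := my_int_bdd P hν0sm hν0b'
  -- kernel representations of conditional expectations
  have hK1 : P[Y1 | MeasurableSpace.comap X inferInstance] =ᵐ[P] ν1 :=
    condExp_ae_eq_integral_condExpKernel hcomap_le intY1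
  have hK0 : P[Y0 | MeasurableSpace.comap X inferInstance] =ᵐ[P] ν0 :=
    condExp_ae_eq_integral_condExpKernel hcomap_le intY0
  have hπk : π =ᵐ[P] fun ω =>
      ∫ y, A y ∂(condExpKernel P (MeasurableSpace.comap X inferInstance) ω) :=
    hπver.trans (condExp_ae_eq_integral_condExpKernel hcomap_le intA)
  -- a.e. independence under the kernel
  have hind1 := my_ae_indepFun P hY1meas hA _ hcomap_le hexch1
  have hind0 := my_ae_indepFun P hY0meas hA _ hcomap_le hexch0
  -- g1 = ν1 * π a.e.
  have hAYeq : (fun ω => A ω * Y ω) = fun ω => A ω * Y1 ω := funext fun ω => by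
    rcases hA01 ω with h | h <;> simp [hY ω, h]
  have hg1eq : g1 =ᵐ[P] fun ω => ν1 ω * π ω := by
    have h2 : P[fun ω => A ω * Y ω | MeasurableSpace.comap X inferInstance] =ᵐ[P] fun ω =>
        ∫ y, A y * Y1 y ∂(condExpKernel P (MeasurableSpace.comap X inferInstance) ω) := by
      rw [hAYeq]; exact condExp_ae_eq_integral_condExpKernel hcomap_le intAY1
    filter_upwards [hg1ver, h2, hind1, hπk] with ω ha hb hc' hd
    rw [ha, hb, hd]
    have hi1 : Integrable Y1 (condExpKernel P (MeasurableSpace.comap X inferInstance) ω) :=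
      my_int_bdd _ hY1meas.aestronglyMeasurable hY1b'
    have hi2 : Integrable A (condExpKernel P (MeasurableSpace.comap X inferInstance) ω) :=
      my_int_bdd _ hA.aestronglyMeasurable hAb
    have hmul := hc'.integral_mul_eq_mul_integral hi1.aestronglyMeasurable hi2.aestronglyMeasurable
    simp only [Pi.mul_apply] at hmul
    calc ∫ y, A y * Y1 y ∂(condExpKernel P (MeasurableSpace.comap X inferInstance) ω)
        = ∫ y, Y1 y * A y ∂(condExpKernel P (MeasurableSpace.comap X inferInstance) ω) := by
          simp_rw [mul_comm]
      _ = _ := hmul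
  -- g0 = ν0 * (1 - π) a.e.
  have h1AYeq : (fun ω => (1 - A ω) * Y ω) = fun ω => (1 - A ω) * Y0 ω := funext fun ω => by
    rcases hA01 ω with h | h <;> simp [hY ω, h]
  have hg0eq : g0 =ᵐ[P] fun ω => ν0 ω * (1 - π ω) := by
    have h2 : P[fun ω => (1 - A ω) * Y ω | MeasurableSpace.comap X inferInstance] =ᵐ[P] fun ω =>
        ∫ y, (1 - A y) * Y0 y ∂(condExpKernel P (MeasurableSpace.comap X inferInstance) ω) := by
      rw [h1AYeq]; exact condExp_ae_eq_integral_condExpKernel hcomap_le int1AY0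
    filter_upwards [hg0ver, h2, hind0, hπk] with ω ha hb hc' hd
    rw [ha, hb, hd]
    have hi1 : Integrable Y0 (condExpKernel P (MeasurableSpace.comap X inferInstance) ω) :=
      my_int_bdd _ hY0meas.aestronglyMeasurable hY0b'
    have hi2 : Integrable A (condExpKernel P (MeasurableSpace.comap X inferInstance) ω) :=
      my_int_bdd _ hA.aestronglyMeasurable hAb
    have hi12 : Integrable (fun y => Y0 y * A y)
        (condExpKernel P (MeasurableSpace.comap X inferInstance) ω) :=
      my_int_bdd _ (hY0meas.mul hA).aestronglyMeasurable (fun y => by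
        rw [abs_mul]; exact mul_le_one₀ (hY0b' y) (abs_nonneg _) (hAb y))
    have hmul : (∫ y, Y0 y * A y ∂(condExpKernel P (MeasurableSpace.comap X inferInstance) ω)) =
        (∫ y, Y0 y ∂(condExpKernel P (MeasurableSpace.comap X inferInstance) ω)) *
          ∫ y, A y ∂(condExpKernel P (MeasurableSpace.comap X inferInstance) ω) :=
      hc'.integral_mul_eq_mul_integral hi1.aestronglyMeasurable hi2.aestronglyMeasurable
    have hsplit : (fun y => (1 - A y) * Y0 y) = fun y => Y0 y - Y0 y * A y := by
      funext y; ring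
    have hv : ν0 ω = ∫ y, Y0 y ∂(condExpKernel P (MeasurableSpace.comap X inferInstance) ω) := rfl
    rw [hsplit, integral_sub hi1 hi12, hmul, hv]
    ring
  -- rewrite ψ with ν's
  have hψind1 : {ω' | c < π ω'}.indicator μ1 =ᵐ[P] {ω' | c < π ω'}.indicator ν1 := by
    filter_upwards [hg1eq] with ω hω
    by_cases hmem : ω ∈ {ω' | c < π ω'}
    · rw [Set.indicator_of_mem hmem, Set.indicator_of_mem hmem, hμ1 ω]
      have h0 : 0 < π ω := lt_of_le_of_lt hc.1 hmem
      rw [if_pos h0, hω, mul_div_assoc, div_self (ne_of_gt h0), mul_one]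
    · rw [Set.indicator_of_notMem hmem, Set.indicator_of_notMem hmem]
  have hψind0 : {ω' | π ω' < 1 - c}.indicator μ0 =ᵐ[P] {ω' | π ω' < 1 - c}.indicator ν0 := by
    filter_upwards [hg0eq] with ω hω
    by_cases hmem : ω ∈ {ω' | π ω' < 1 - c}
    · rw [Set.indicator_of_mem hmem, Set.indicator_of_mem hmem, hμ0 ω]
      have h0 : π ω < 1 := lt_of_lt_of_le hmem (by linarith [hc.1])
      have h0' : (0:ℝ) < 1 - π ω := by linarith
      rw [if_pos h0, hω, mul_div_assoc, div_self (ne_of_gt h0'), mul_one]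
    · rw [Set.indicator_of_notMem hmem, Set.indicator_of_notMem hmem]
  have hψeq : ψ = ∫ ω,
      ({ω' | c < π ω'}.indicator ν1 ω - {ω' | π ω' < 1 - c}.indicator ν0 ω) ∂P := by
    rw [hψ]
    exact integral_congr_ae (by
      filter_upwards [hψind1, hψind0] with ω h1 h2
      rw [h1, h2])
  -- ATE in terms of ν's
  have hateq : ∫ ω, (Y1 ω - Y0 ω) ∂P = ∫ ω, (ν1 ω - ν0 ω) ∂P := by
    rw [integral_sub intY1 intY0, integral_sub intν1 intν0]
    congr 1
    · rw [← integral_condExp hcomap_le (f := Y1) (μ := P)]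
      exact integral_congr_ae hK1
    · rw [← integral_condExp hcomap_le (f := Y0) (μ := P)]
      exact integral_congr_ae hK0
  -- indicator bounds helper
  have hindb : ∀ (s : Set Ω) (f : Ω → ℝ), (∀ ω, |f ω| ≤ 1) → ∀ ω, |s.indicator f ω| ≤ 1 := by
    intro s f hf ω
    rw [Set.indicator_apply]
    split_ifs
    · exact hf ω
    · simp
  have hintind1 : Integrable ({ω' | c < π ω'}.indicator ν1) P :=
    my_int_bdd P (hν1sm.indicator hs1) (hindb _ _ hν1b')
  have hintind2 : Integrable ({ω' | π ω' < 1 - c}.indicator ν0) P :=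
    my_int_bdd P (hν0sm.indicator hs2) (hindb _ _ hν0b')
  have hintind3 : Integrable ({ω | π ω ≤ c}.indicator fun _ => (1 : ℝ)) P :=
    (integrable_const 1).indicator hs3
  have hintind4 : Integrable ({ω | 1 - c ≤ π ω}.indicator fun _ => (1 : ℝ)) P :=
    (integrable_const 1).indicator hs4
  have hf12 : Integrable (fun ω => {ω' | c < π ω'}.indicator ν1 ω -
      {ω' | π ω' < 1 - c}.indicator ν0 ω) P := hintind1.sub hintind2
  constructor
  · -- lower bound
    have hL' : L = ∫ ω, (({ω' | c < π ω'}.indicator ν1 ω -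
        {ω' | π ω' < 1 - c}.indicator ν0 ω) -
        {ω | 1 - c ≤ π ω}.indicator (fun _ => (1 : ℝ)) ω) ∂P := by
      rw [hL, hψeq, integral_sub hf12 hintind4,
        integral_indicator_const (1 : ℝ) hs4, smul_eq_mul, mul_one]
      rfl
    rw [hL', hateq]
    refine integral_mono ((hintind1.sub hintind2).sub hintind4) (intν1.sub intν0) ?_
    intro ω
    have b1 := hν1b ω
    have b0 := hν0b ω
    simp only [Set.indicator_apply, Set.mem_setOf_eq]
    split_ifs <;> linarith [b1.1, b1.2, b0.1, b0.2]
  · -- upper bound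
    have hU' : U = ∫ ω, (({ω' | c < π ω'}.indicator ν1 ω -
        {ω' | π ω' < 1 - c}.indicator ν0 ω) +
        {ω | π ω ≤ c}.indicator (fun _ => (1 : ℝ)) ω) ∂P := by
      rw [hU, hψeq, integral_add hf12 hintind3,
        integral_indicator_const (1 : ℝ) hs3, smul_eq_mul, mul_one]
      rfl
    rw [hU', hateq]
    refine integral_mono (intν1.sub intν0) ((hintind1.sub hintind2).add hintind3) ?_
    intro ω
    have b1 := hν1b ω
    have b0 := hν0b ω
    simp only [Set.indicator_apply, Set.mem_setOf_eq]
    split_ifs <;> linarith [b1.1, b1.2, b0.1, b0.2]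
end

section
/- (Smooth approximation error sandwich; key inequality in the proof of Proposition 2.) The smooth approximation error of the trimmed effect satisfies E[s_l(π, 1−c, γ)] − P(π < 1−c) ≤ ψ(c) − ψ_s(c, γ) ≤ P(π > c) − E[s_g(π, c, γ)]. -/
open MeasureTheory

/-- **Smooth approximation error sandwich**
(key inequality in the proof of Proposition 2).
If the smooth approximation functions bound the respective indicators from below
(Property 1), then the smooth approximation error of the trimmed effect satisfies
`E[s_l(π, 1−c, γ)] − P(π < 1−c) ≤ ψ(c) − ψ_s(c, γ) ≤ P(π > c) − E[s_g(π, c, γ)]`. -/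
theorem smooth_approximation_error_sandwich
    {Ω : Type*} [MeasurableSpace Ω] (P : Measure Ω) [IsProbabilityMeasure P]
    (π μ0 μ1 : Ω → ℝ)
    (hπmeas : Measurable π) (hμ0meas : Measurable μ0) (hμ1meas : Measurable μ1)
    (hπb : ∀ ω, π ω ∈ Set.Icc (0 : ℝ) 1)
    (hμ0b : ∀ ω, μ0 ω ∈ Set.Icc (0 : ℝ) 1) (hμ1b : ∀ ω, μ1 ω ∈ Set.Icc (0 : ℝ) 1)
    (c : ℝ) (hc : c ∈ Set.Icc (0 : ℝ) (1 / 2)) (γ : ℝ) (hγ : 0 < γ)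
    -- the smooth approximation functions `x ↦ s_l(x, 1−c, γ)` and `x ↦ s_g(x, c, γ)`
    (sl sg : ℝ → ℝ) (hslmeas : Measurable sl) (hsgmeas : Measurable sg)
    (hslb : ∀ x ∈ Set.Icc (0 : ℝ) 1, sl x ∈ Set.Icc (0 : ℝ) 1)
    (hsgb : ∀ x ∈ Set.Icc (0 : ℝ) 1, sg x ∈ Set.Icc (0 : ℝ) 1)
    -- Property 1: the smooth approximations bound the indicators from below
    (hsl_le : ∀ x ∈ Set.Icc (0 : ℝ) 1, sl x ≤ {y : ℝ | y < 1 - c}.indicator (fun _ => 1) x)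
    (hsg_le : ∀ x ∈ Set.Icc (0 : ℝ) 1, sg x ≤ {y : ℝ | c < y}.indicator (fun _ => 1) x)
    -- the trimmed effect `ψ(c)` and its smooth approximation `ψ_s(c, γ)`
    (ψ ψs : ℝ)
    (hψ : ψ = ∫ ω, ({ω' | c < π ω'}.indicator μ1 ω - {ω' | π ω' < 1 - c}.indicator μ0 ω) ∂P)
    (hψs : ψs = ∫ ω, (μ1 ω * sg (π ω) - μ0 ω * sl (π ω)) ∂P) :
    (∫ ω, sl (π ω) ∂P) - (P {ω | π ω < 1 - c}).toReal ≤ ψ - ψs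
      ∧ ψ - ψs ≤ (P {ω | c < π ω}).toReal - ∫ ω, sg (π ω) ∂P := by
  have hA : MeasurableSet {ω | c < π ω} := measurableSet_lt measurable_const hπmeas
  have hB : MeasurableSet {ω | π ω < 1 - c} := measurableSet_lt hπmeas measurable_const
  have hint : ∀ (g : Ω → ℝ), Measurable g → (∀ ω, |g ω| ≤ 1) → Integrable g P := by
    intro g hg hb
    exact (integrable_const (1:ℝ)).mono' hg.aestronglyMeasurable
      (Filter.Eventually.of_forall hb)
  have habs : ∀ x : ℝ, x ∈ Set.Icc (0:ℝ) 1 → |x| ≤ 1 := by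
    intro x hx; rw [abs_le]; constructor <;> [linarith [hx.1]; exact hx.2]
  have hi1 : Integrable (fun ω => {ω' | c < π ω'}.indicator μ1 ω) P := by
    refine hint _ (hμ1meas.indicator hA) fun ω => ?_
    by_cases h : ω ∈ {ω' | c < π ω'}
    · simp [Set.indicator_of_mem h]; exact habs _ (hμ1b ω)
    · simp [Set.indicator_of_notMem h]
  have hi2 : Integrable (fun ω => {ω' | π ω' < 1 - c}.indicator μ0 ω) P := by
    refine hint _ (hμ0meas.indicator hB) fun ω => ?_
    by_cases h : ω ∈ {ω' | π ω' < 1 - c}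
    · simp [Set.indicator_of_mem h]; exact habs _ (hμ0b ω)
    · simp [Set.indicator_of_notMem h]
  have hi3 : Integrable (fun ω => μ1 ω * sg (π ω)) P := by
    refine hint _ (hμ1meas.mul (hsgmeas.comp hπmeas)) fun ω => ?_
    rw [abs_mul]
    calc |μ1 ω| * |sg (π ω)| ≤ 1 * 1 := by
          exact mul_le_mul (habs _ (hμ1b ω)) (habs _ (hsgb _ (hπb ω)))
            (abs_nonneg _) zero_le_one
      _ = 1 := by ring
  have hi4 : Integrable (fun ω => μ0 ω * sl (π ω)) P := by
    refine hint _ (hμ0meas.mul (hslmeas.comp hπmeas)) fun ω => ?_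
    rw [abs_mul]
    calc |μ0 ω| * |sl (π ω)| ≤ 1 * 1 := by
          exact mul_le_mul (habs _ (hμ0b ω)) (habs _ (hslb _ (hπb ω)))
            (abs_nonneg _) zero_le_one
      _ = 1 := by ring
  have hisl : Integrable (fun ω => sl (π ω)) P :=
    hint _ (hslmeas.comp hπmeas) fun ω => habs _ (hslb _ (hπb ω))
  have hisg : Integrable (fun ω => sg (π ω)) P :=
    hint _ (hsgmeas.comp hπmeas) fun ω => habs _ (hsgb _ (hπb ω))
  have hiIA : Integrable (fun ω => ({ω | c < π ω}).indicator (fun _ => (1:ℝ)) ω) P := by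
    refine hint _ (measurable_const.indicator hA) fun ω => ?_
    by_cases h : ω ∈ {ω | c < π ω} <;> simp [Set.indicator_of_mem, Set.indicator_of_notMem, h]
  have hiIB : Integrable (fun ω => ({ω | π ω < 1 - c}).indicator (fun _ => (1:ℝ)) ω) P := by
    refine hint _ (measurable_const.indicator hB) fun ω => ?_
    by_cases h : ω ∈ {ω | π ω < 1 - c} <;> simp [Set.indicator_of_mem, Set.indicator_of_notMem, h]
  -- pointwise bounds
  have hpt : ∀ ω,
      sl (π ω) - ({ω | π ω < 1 - c}).indicator (fun _ => (1:ℝ)) ω ≤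
        (({ω' | c < π ω'}).indicator μ1 ω - ({ω' | π ω' < 1 - c}).indicator μ0 ω)
          - (μ1 ω * sg (π ω) - μ0 ω * sl (π ω)) ∧
      (({ω' | c < π ω'}).indicator μ1 ω - ({ω' | π ω' < 1 - c}).indicator μ0 ω)
          - (μ1 ω * sg (π ω) - μ0 ω * sl (π ω)) ≤
        ({ω | c < π ω}).indicator (fun _ => (1:ℝ)) ω - sg (π ω) := by
    intro ω
    have h0 := hμ0b ω; have h1 := hμ1b ω
    have hsl0 := hslb _ (hπb ω); have hsg0 := hsgb _ (hπb ω)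
    have hsle := hsl_le _ (hπb ω); have hsge := hsg_le _ (hπb ω)
    by_cases hAm : c < π ω <;> by_cases hBm : π ω < 1 - c
    all_goals
      simp only [Set.indicator_apply, Set.mem_setOf_eq, hAm, hBm, if_true, if_false] at *
    all_goals simp only [Set.Icc, Set.mem_setOf_eq] at h0 h1 hsl0 hsg0
    all_goals constructor <;> nlinarith [h0.1, h0.2, h1.1, h1.2, hsl0.1, hsl0.2, hsg0.1, hsg0.2]
  -- rewrite ψ - ψs as an integral
  have hdiff : ψ - ψs = ∫ ω,
      ((({ω' | c < π ω'}).indicator μ1 ω - ({ω' | π ω' < 1 - c}).indicator μ0 ω)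
        - (μ1 ω * sg (π ω) - μ0 ω * sl (π ω))) ∂P := by
    rw [hψ, hψs]
    exact (integral_sub (hi1.sub hi2) (hi3.sub hi4)).symm
  have hPB : (P {ω | π ω < 1 - c}).toReal
      = ∫ ω, ({ω | π ω < 1 - c}).indicator (fun _ => (1:ℝ)) ω ∂P := by
    exact (integral_indicator_one hB).symm
  have hPA : (P {ω | c < π ω}).toReal
      = ∫ ω, ({ω | c < π ω}).indicator (fun _ => (1:ℝ)) ω ∂P := by
    exact (integral_indicator_one hA).symm
  constructor
  · rw [hdiff, hPB, ← integral_sub hisl hiIB]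
    exact integral_mono (hisl.sub hiIB) ((hi1.sub hi2).sub (hi3.sub hi4)) fun ω => (hpt ω).1
  · rw [hdiff, hPA, ← integral_sub hiIA hisg]
    exact integral_mono ((hi1.sub hi2).sub (hi3.sub hi4)) (hiIA.sub hisg) fun ω => (hpt ω).2
end

section
/- (The smooth lower bound lies below the exact lower bound.) For every trimming threshold c ∈ [0, 1/2] and every γ > 0, L_s(c, γ) ≤ L(c). -/
open MeasureTheory

/-- **The smooth lower bound lies below the exact lower bound.**
For every trimming threshold `c ∈ [0, 1/2]` and every `γ > 0`, `L_s(c, γ) ≤ L(c)`. -/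
theorem smooth_lower_bound_le_exact_lower_bound
    {Ω : Type*} [MeasurableSpace Ω] (P : Measure Ω) [IsProbabilityMeasure P]
    (π μ0 μ1 : Ω → ℝ)
    (hπmeas : Measurable π) (hμ0meas : Measurable μ0) (hμ1meas : Measurable μ1)
    (hπb : ∀ ω, π ω ∈ Set.Icc (0 : ℝ) 1)
    (hμ0b : ∀ ω, μ0 ω ∈ Set.Icc (0 : ℝ) 1) (hμ1b : ∀ ω, μ1 ω ∈ Set.Icc (0 : ℝ) 1)
    (c : ℝ) (hc : c ∈ Set.Icc (0 : ℝ) (1 / 2)) (γ : ℝ) (hγ : 0 < γ)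
    -- the smooth approximation functions `x ↦ s_l(x, 1−c, γ)` and `x ↦ s_g(x, c, γ)`
    (sl sg : ℝ → ℝ) (hslmeas : Measurable sl) (hsgmeas : Measurable sg)
    (hslb : ∀ x ∈ Set.Icc (0 : ℝ) 1, sl x ∈ Set.Icc (0 : ℝ) 1)
    (hsgb : ∀ x ∈ Set.Icc (0 : ℝ) 1, sg x ∈ Set.Icc (0 : ℝ) 1)
    -- Property 1: the smooth approximations bound the indicators from below
    (hsl_le : ∀ x ∈ Set.Icc (0 : ℝ) 1, sl x ≤ {y : ℝ | y < 1 - c}.indicator (fun _ => 1) x)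
    (hsg_le : ∀ x ∈ Set.Icc (0 : ℝ) 1, sg x ≤ {y : ℝ | c < y}.indicator (fun _ => 1) x)
    -- the exact trimmed effect and bounds
    (ψ L U : ℝ)
    (hψ : ψ = ∫ ω, ({ω' | c < π ω'}.indicator μ1 ω - {ω' | π ω' < 1 - c}.indicator μ0 ω) ∂P)
    (hL : L = ψ - (P {ω | 1 - c ≤ π ω}).toReal)
    (hU : U = ψ + (P {ω | π ω ≤ c}).toReal)
    -- the smooth trimmed effect and smooth bounds
    (ψs Ls Us : ℝ)
    (hψs : ψs = ∫ ω, (μ1 ω * sg (π ω) - μ0 ω * sl (π ω)) ∂P)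
    (hLs : Ls = ψs - (1 - ∫ ω, sl (π ω) ∂P))
    (hUs : Us = ψs + (1 - ∫ ω, sg (π ω) ∂P)) :
    Ls ≤ L := by
  have hI : ∀ (h : Ω → ℝ), Measurable h → (∀ ω, |h ω| ≤ 1) → Integrable h P := by
    intro h hm hb
    exact (integrable_const (1 : ℝ)).mono' hm.aestronglyMeasurable (ae_of_all _ hb)
  set S : Set Ω := {ω' | π ω' < 1 - c} with hSdef
  set T : Set Ω := {ω' | c < π ω'} with hTdef
  have hSmeas : MeasurableSet S := measurableSet_lt hπmeas measurable_const
  have hTmeas : MeasurableSet T := measurableSet_lt measurable_const hπmeas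
  have hslb' : ∀ ω, sl (π ω) ∈ Set.Icc (0 : ℝ) 1 := fun ω => hslb _ (hπb ω)
  have hsgb' : ∀ ω, sg (π ω) ∈ Set.Icc (0 : ℝ) 1 := fun ω => hsgb _ (hπb ω)
  have iμ0 : Integrable μ0 P := hI _ hμ0meas fun ω => abs_le.2 ⟨by linarith [(hμ0b ω).1], (hμ0b ω).2⟩
  have iμ1 : Integrable μ1 P := hI _ hμ1meas fun ω => abs_le.2 ⟨by linarith [(hμ1b ω).1], (hμ1b ω).2⟩
  have iA : Integrable (fun ω => μ1 ω * sg (π ω)) P := by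
    refine hI _ (hμ1meas.mul (hsgmeas.comp hπmeas)) fun ω => abs_le.2 ⟨?_, ?_⟩
    · nlinarith [(hμ1b ω).1, (hsgb' ω).1]
    · nlinarith [(hμ1b ω).1, (hμ1b ω).2, (hsgb' ω).1, (hsgb' ω).2]
  have iB : Integrable (fun ω => μ0 ω * sl (π ω)) P := by
    refine hI _ (hμ0meas.mul (hslmeas.comp hπmeas)) fun ω => abs_le.2 ⟨?_, ?_⟩
    · nlinarith [(hμ0b ω).1, (hslb' ω).1]
    · nlinarith [(hμ0b ω).1, (hμ0b ω).2, (hslb' ω).1, (hslb' ω).2]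
  have iC : Integrable (fun ω => sl (π ω)) P :=
    hI _ (hslmeas.comp hπmeas) fun ω => abs_le.2 ⟨by linarith [(hslb' ω).1], (hslb' ω).2⟩
  have iA' : Integrable (T.indicator μ1) P := iμ1.indicator hTmeas
  have iB' : Integrable (S.indicator μ0) P := iμ0.indicator hSmeas
  have iC' : Integrable (S.indicator fun _ => (1 : ℝ)) P :=
    (integrable_const (1 : ℝ)).indicator hSmeas
  -- pointwise comparison
  have hpt : ∀ ω, μ1 ω * sg (π ω) - μ0 ω * sl (π ω) + sl (π ω) ≤
      (T.indicator μ1 ω - S.indicator μ0 ω) + S.indicator (fun _ => (1 : ℝ)) ω := by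
    intro ω
    have hsg := hsg_le _ (hπb ω)
    have hsl := hsl_le _ (hπb ω)
    have h1 : μ1 ω * sg (π ω) ≤ T.indicator μ1 ω := by
      by_cases hx : c < π ω
      · have : sg (π ω) ≤ 1 := by simpa [Set.indicator, hx] using hsg
        have := (hμ1b ω).1
        simp only [Set.indicator, hTdef, Set.mem_setOf_eq, hx, if_true]
        nlinarith
      · have hsg0 : sg (π ω) ≤ 0 := by simpa [Set.indicator, hx] using hsg
        simp only [Set.indicator, hTdef, Set.mem_setOf_eq, hx, if_false]
        nlinarith [(hμ1b ω).1]
    have h2 : sl (π ω) - μ0 ω * sl (π ω) ≤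
        S.indicator (fun _ => (1 : ℝ)) ω - S.indicator μ0 ω := by
      by_cases hx : π ω < 1 - c
      · have hsl1 : sl (π ω) ≤ 1 := by simpa [Set.indicator, hx] using hsl
        simp only [Set.indicator, hSdef, Set.mem_setOf_eq, hx, if_true]
        nlinarith [(hμ0b ω).2]
      · have hsl0 : sl (π ω) ≤ 0 := by simpa [Set.indicator, hx] using hsl
        simp only [Set.indicator, hSdef, Set.mem_setOf_eq, hx, if_false]
        nlinarith [(hμ0b ω).2]
    linarith
  have key : ∫ ω, (μ1 ω * sg (π ω) - μ0 ω * sl (π ω) + sl (π ω)) ∂P ≤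
      ∫ ω, ((T.indicator μ1 ω - S.indicator μ0 ω) + S.indicator (fun _ => (1 : ℝ)) ω) ∂P :=
    integral_mono ((iA.sub iB).add iC) ((iA'.sub iB').add iC') hpt
  have hLHS : ∫ ω, (μ1 ω * sg (π ω) - μ0 ω * sl (π ω) + sl (π ω)) ∂P =
      ψs + ∫ ω, sl (π ω) ∂P := by
    rw [hψs]
    have h := integral_add (iA.sub iB) iC
    simpa using h
  have hCint : ∫ ω, S.indicator (fun _ => (1 : ℝ)) ω ∂P = (P S).toReal := by
    rw [integral_indicator_const (1 : ℝ) hSmeas]; simp [Measure.real]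
  have hRHS : ∫ ω, ((T.indicator μ1 ω - S.indicator μ0 ω) + S.indicator (fun _ => (1 : ℝ)) ω) ∂P =
      ψ + (P S).toReal := by
    rw [← hCint, hψ]
    have h := integral_add (iA'.sub iB') iC'
    simpa using h
  have hcompl : (P Sᶜ).toReal = 1 - (P S).toReal := by
    have hsum := measure_add_measure_compl hSmeas (μ := P)
    have := congrArg ENNReal.toReal hsum
    rw [ENNReal.toReal_add (measure_ne_top P S) (measure_ne_top P Sᶜ)] at this
    simp at this
    linarith
  have hSc : {ω | 1 - c ≤ π ω} = Sᶜ := by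
    ext ω; simp [hSdef, not_lt]
  rw [hLs, hL, hSc, hcompl]
  rw [hLHS, hRHS] at key
  linarith
end

section
/- (Proposition 2: smooth non-overlap bounds on the ATE.) For every trimming threshold c ∈ [0, 1/2] and every γ > 0, the average treatment effect satisfies L_s(c, γ) ≤ E[Y¹ − Y⁰] ≤ U_s(c, γ). -/
open MeasureTheory ProbabilityTheory

lemma integrable_of_abs_le' {Ω : Type*} [MeasurableSpace Ω] {P : Measure Ω} [IsFiniteMeasure P]
    {f : Ω → ℝ} (hf : Measurable f) {C : ℝ} (h : ∀ ω, |f ω| ≤ C) : Integrable f P :=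
  Integrable.mono' (integrable_const C) hf.aestronglyMeasurable
    (Filter.Eventually.of_forall (fun ω => by simpa [Real.norm_eq_abs] using h ω))

lemma condexp_mul_ae_of_condIndepFun
    {Ω : Type*} {m : MeasurableSpace Ω} [mΩ : MeasurableSpace Ω] [StandardBorelSpace Ω] [Nonempty Ω]
    {P : Measure Ω} [IsProbabilityMeasure P]
    (hm : m ≤ mΩ)
    {f g : Ω → ℝ} (hf : Measurable f) (hg : Measurable g)
    (hfb : ∀ ω, |f ω| ≤ 1) (hgb : ∀ ω, |g ω| ≤ 1)
    (hind : CondIndepFun m hm f g P) :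
    P[fun ω => f ω * g ω | m] =ᵐ[P] fun ω => (P[f|m]) ω * (P[g|m]) ω := by
  set κ := condExpKernel (mΩ := mΩ) P m with hκ
  have h1 : ∀ᵐ ω ∂P, ∀ q r : ℚ,
      κ ω (f ⁻¹' Set.Iic (q:ℝ) ∩ g ⁻¹' Set.Iic (r:ℝ))
        = κ ω (f ⁻¹' Set.Iic (q:ℝ)) * κ ω (g ⁻¹' Set.Iic (r:ℝ)) := by
    rw [ae_all_iff]
    intro q
    rw [ae_all_iff]
    intro r
    exact ae_of_ae_trim hm (hind _ _ ⟨Set.Iic (q:ℝ), measurableSet_Iic, rfl⟩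
      ⟨Set.Iic (r:ℝ), measurableSet_Iic, rfl⟩)
  have hpi : ∀ (h : Ω → ℝ), IsPiSystem ((fun s => h ⁻¹' s) '' (⋃ a : ℚ, {Set.Iic (a:ℝ)})) := by
    intro h
    rintro t1 ⟨s1, hs1, rfl⟩ t2 ⟨s2, hs2, rfl⟩ _
    simp only [Set.mem_iUnion, Set.mem_singleton_iff] at hs1 hs2
    obtain ⟨q, rfl⟩ := hs1; obtain ⟨r, rfl⟩ := hs2
    refine ⟨Set.Iic ((min q r : ℚ) : ℝ), ?_, ?_⟩
    · simp only [Set.mem_iUnion, Set.mem_singleton_iff]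
      exact ⟨min q r, rfl⟩
    · rw [← Set.preimage_inter, Set.Iic_inter_Iic]
      push_cast
      rfl
  have hgen : ∀ (h : Ω → ℝ), MeasurableSpace.comap h (inferInstance : MeasurableSpace ℝ)
      = MeasurableSpace.generateFrom ((fun s => h ⁻¹' s) '' (⋃ a : ℚ, {Set.Iic (a:ℝ)})) := by
    intro h
    rw [show (inferInstance : MeasurableSpace ℝ)
        = MeasurableSpace.generateFrom (⋃ a : ℚ, {Set.Iic (a:ℝ)}) from
      BorelSpace.measurable_eq.trans Real.borel_eq_generateFrom_Iic_rat,
      MeasurableSpace.comap_generateFrom]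
  have hae : ∀ᵐ ω ∂P, IndepFun f g (κ ω) := by
    filter_upwards [h1] with ω hω
    have hsets : IndepSets ((fun s => f ⁻¹' s) '' (⋃ a : ℚ, {Set.Iic (a:ℝ)}))
        ((fun s => g ⁻¹' s) '' (⋃ a : ℚ, {Set.Iic (a:ℝ)})) (κ ω) := by
      rintro t1 t2 ⟨s1, hs1, rfl⟩ ⟨s2, hs2, rfl⟩
      simp only [Set.mem_iUnion, Set.mem_singleton_iff] at hs1 hs2
      obtain ⟨q, rfl⟩ := hs1; obtain ⟨r, rfl⟩ := hs2
      exact Filter.Eventually.of_forall (fun _ => by simpa using hω q r)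
    exact IndepSets.indep hf.comap_le hg.comap_le (hpi f) (hpi g) (hgen f) (hgen g) hsets
  have hfint : Integrable f P := integrable_of_abs_le' hf hfb
  have hgint : Integrable g P := integrable_of_abs_le' hg hgb
  have hfgint : Integrable (fun ω => f ω * g ω) P := by
    refine integrable_of_abs_le' (hf.mul hg) (C := 1) (fun ω => ?_)
    rw [abs_mul]
    calc |f ω| * |g ω| ≤ 1 * 1 :=
      mul_le_mul (hfb ω) (hgb ω) (abs_nonneg _) zero_le_one
    _ = 1 := by ring
  filter_upwards [condExp_ae_eq_integral_condExpKernel hm hfgint,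
    condExp_ae_eq_integral_condExpKernel hm hfint,
    condExp_ae_eq_integral_condExpKernel hm hgint, hae] with ω e2 e3 e4 hi
  rw [e2, e3, e4]
  exact IndepFun.integral_fun_mul_eq_mul_integral hi hf.aestronglyMeasurable hg.aestronglyMeasurable

/-- **Proposition 2: smooth non-overlap bounds on the ATE.**
Under consistency and conditional exchangeability (but without assuming overlap),
for every trimming threshold `c ∈ [0, 1/2]` and every `γ > 0`, if the smooth
approximation functions satisfy Property 1 then the average treatment effect
satisfies `L_s(c, γ) ≤ E[Y¹ − Y⁰] ≤ U_s(c, γ)`. -/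
theorem smooth_nonoverlap_bounds_on_ate
    {Ω : Type*} [MeasurableSpace Ω] [StandardBorelSpace Ω] [Nonempty Ω]
    (P : Measure Ω) [IsProbabilityMeasure P]
    {𝓧 : Type*} [MeasurableSpace 𝓧] [StandardBorelSpace 𝓧]
    (X : Ω → 𝓧) (hX : Measurable X)
    (A : Ω → ℝ) (hA : Measurable A) (hA01 : ∀ ω, A ω = 0 ∨ A ω = 1)
    (Y0 Y1 : Ω → ℝ) (hY0meas : Measurable Y0) (hY1meas : Measurable Y1)
    (hY0b : ∀ ω, Y0 ω ∈ Set.Icc (0 : ℝ) 1) (hY1b : ∀ ω, Y1 ω ∈ Set.Icc (0 : ℝ) 1)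
    (Y : Ω → ℝ) (hY : ∀ ω, Y ω = A ω * Y1 ω + (1 - A ω) * Y0 ω)
    (π : Ω → ℝ)
    (hπmeas : Measurable[MeasurableSpace.comap X inferInstance] π)
    (hπver : π =ᵐ[P] P[A | MeasurableSpace.comap X inferInstance])
    (hπb : ∀ ω, π ω ∈ Set.Icc (0 : ℝ) 1)
    -- conditional exchangeability
    (hcomap_le : MeasurableSpace.comap X inferInstance ≤ ‹MeasurableSpace Ω›)
    (hexch1 : CondIndepFun (MeasurableSpace.comap X inferInstance) hcomap_le Y1 A P)
    (hexch0 : CondIndepFun (MeasurableSpace.comap X inferInstance) hcomap_le Y0 A P)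
    -- outcome regressions
    (g1 g0 : Ω → ℝ)
    (hg1meas : Measurable[MeasurableSpace.comap X inferInstance] g1)
    (hg0meas : Measurable[MeasurableSpace.comap X inferInstance] g0)
    (hg1ver : g1 =ᵐ[P] P[fun ω => A ω * Y ω | MeasurableSpace.comap X inferInstance])
    (hg0ver : g0 =ᵐ[P] P[fun ω => (1 - A ω) * Y ω | MeasurableSpace.comap X inferInstance])
    (μ1 μ0 : Ω → ℝ)
    (hμ1 : ∀ ω, μ1 ω = if 0 < π ω then g1 ω / π ω else 0)
    (hμ0 : ∀ ω, μ0 ω = if π ω < 1 then g0 ω / (1 - π ω) else 0)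
    (c : ℝ) (hc : c ∈ Set.Icc (0 : ℝ) (1 / 2)) (γ : ℝ) (hγ : 0 < γ)
    -- the smooth approximation functions `x ↦ s_l(x, 1−c, γ)` and `x ↦ s_g(x, c, γ)`
    (sl sg : ℝ → ℝ) (hslmeas : Measurable sl) (hsgmeas : Measurable sg)
    (hslb : ∀ x ∈ Set.Icc (0 : ℝ) 1, sl x ∈ Set.Icc (0 : ℝ) 1)
    (hsgb : ∀ x ∈ Set.Icc (0 : ℝ) 1, sg x ∈ Set.Icc (0 : ℝ) 1)
    -- Property 1: the smooth approximations bound the indicators from below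
    (hsl_le : ∀ x ∈ Set.Icc (0 : ℝ) 1, sl x ≤ {y : ℝ | y < 1 - c}.indicator (fun _ => 1) x)
    (hsg_le : ∀ x ∈ Set.Icc (0 : ℝ) 1, sg x ≤ {y : ℝ | c < y}.indicator (fun _ => 1) x)
    -- the smooth trimmed effect and smooth bounds
    (ψs Ls Us : ℝ)
    (hψs : ψs = ∫ ω, (μ1 ω * sg (π ω) - μ0 ω * sl (π ω)) ∂P)
    (hLs : Ls = ψs - (1 - ∫ ω, sl (π ω) ∂P))
    (hUs : Us = ψs + (1 - ∫ ω, sg (π ω) ∂P)) :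
    Ls ≤ ∫ ω, (Y1 ω - Y0 ω) ∂P ∧ ∫ ω, (Y1 ω - Y0 ω) ∂P ≤ Us := by
  have hm : MeasurableSpace.comap X inferInstance ≤ ‹MeasurableSpace Ω› := hcomap_le
  have hπm : Measurable π := hπmeas.mono hm le_rfl
  have hA1 : ∀ ω, |A ω| ≤ 1 := fun ω => by rcases hA01 ω with h | h <;> simp [h]
  have hY1abs : ∀ ω, |Y1 ω| ≤ 1 := fun ω =>
    abs_le.2 ⟨by linarith [(hY1b ω).1], (hY1b ω).2⟩
  have hY0abs : ∀ ω, |Y0 ω| ≤ 1 := fun ω =>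
    abs_le.2 ⟨by linarith [(hY0b ω).1], (hY0b ω).2⟩
  have hsgπ : ∀ ω, sg (π ω) ∈ Set.Icc (0 : ℝ) 1 := fun ω => hsgb _ (hπb ω)
  have hslπ : ∀ ω, sl (π ω) ∈ Set.Icc (0 : ℝ) 1 := fun ω => hslb _ (hπb ω)
  have hsg0 : sg 0 = 0 := by
    refine le_antisymm ?_ (hsgb 0 ⟨le_rfl, zero_le_one⟩).1
    have := hsg_le 0 ⟨le_rfl, zero_le_one⟩
    rwa [Set.indicator_of_notMem (by simpa using not_lt.2 hc.1)] at this
  have hsl1 : sl 1 = 0 := by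
    refine le_antisymm ?_ (hslb 1 ⟨zero_le_one, le_rfl⟩).1
    have := hsl_le 1 ⟨zero_le_one, le_rfl⟩
    rwa [Set.indicator_of_notMem (by simp; linarith [hc.1])] at this
  -- integrability
  have hY1int : Integrable Y1 P := integrable_of_abs_le' hY1meas hY1abs
  have hY0int : Integrable Y0 P := integrable_of_abs_le' hY0meas hY0abs
  have hAY1int : Integrable (fun ω => A ω * Y1 ω) P :=
    integrable_of_abs_le' (hA.mul hY1meas) (C := 1) fun ω => by
      rw [abs_mul]
      calc |A ω| * |Y1 ω| ≤ 1 * 1 :=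
        mul_le_mul (hA1 ω) (hY1abs ω) (abs_nonneg _) zero_le_one
      _ = 1 := one_mul 1
  have hAY0int : Integrable (fun ω => A ω * Y0 ω) P :=
    integrable_of_abs_le' (hA.mul hY0meas) (C := 1) fun ω => by
      rw [abs_mul]
      calc |A ω| * |Y0 ω| ≤ 1 * 1 :=
        mul_le_mul (hA1 ω) (hY0abs ω) (abs_nonneg _) zero_le_one
      _ = 1 := one_mul 1
  have hsgm : Measurable (fun ω => sg (π ω)) := hsgmeas.comp hπm
  have hslm : Measurable (fun ω => sl (π ω)) := hslmeas.comp hπm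
  have hsgint : Integrable (fun ω => sg (π ω)) P :=
    integrable_of_abs_le' hsgm (C := 1) fun ω => by
      rw [abs_of_nonneg (hsgπ ω).1]; exact (hsgπ ω).2
  have hslint : Integrable (fun ω => sl (π ω)) P :=
    integrable_of_abs_le' hslm (C := 1) fun ω => by
      rw [abs_of_nonneg (hslπ ω).1]; exact (hslπ ω).2
  have hB1int : Integrable (fun ω => sg (π ω) * Y1 ω) P :=
    integrable_of_abs_le' (hsgm.mul hY1meas) (C := 1) fun ω => by
      rw [abs_mul, abs_of_nonneg (hsgπ ω).1]
      calc sg (π ω) * |Y1 ω| ≤ 1 * 1 :=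
        mul_le_mul (hsgπ ω).2 (hY1abs ω) (abs_nonneg _) zero_le_one
      _ = 1 := one_mul 1
  have hB0int : Integrable (fun ω => sl (π ω) * Y0 ω) P :=
    integrable_of_abs_le' (hslm.mul hY0meas) (C := 1) fun ω => by
      rw [abs_mul, abs_of_nonneg (hslπ ω).1]
      calc sl (π ω) * |Y0 ω| ≤ 1 * 1 :=
        mul_le_mul (hslπ ω).2 (hY0abs ω) (abs_nonneg _) zero_le_one
      _ = 1 := one_mul 1
  have hR1int : Integrable (fun ω => (1 - sg (π ω)) * Y1 ω) P :=
    integrable_of_abs_le' ((measurable_const.sub hsgm).mul hY1meas) (C := 1) fun ω => by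
      rw [abs_mul, abs_of_nonneg (by linarith [(hsgπ ω).2] : (0:ℝ) ≤ 1 - sg (π ω))]
      calc (1 - sg (π ω)) * |Y1 ω| ≤ 1 * 1 :=
        mul_le_mul (by linarith [(hsgπ ω).1]) (hY1abs ω) (abs_nonneg _) zero_le_one
      _ = 1 := one_mul 1
  have hR0int : Integrable (fun ω => (1 - sl (π ω)) * Y0 ω) P :=
    integrable_of_abs_le' ((measurable_const.sub hslm).mul hY0meas) (C := 1) fun ω => by
      rw [abs_mul, abs_of_nonneg (by linarith [(hslπ ω).2] : (0:ℝ) ≤ 1 - sl (π ω))]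
      calc (1 - sl (π ω)) * |Y0 ω| ≤ 1 * 1 :=
        mul_le_mul (by linarith [(hslπ ω).1]) (hY0abs ω) (abs_nonneg _) zero_le_one
      _ = 1 := one_mul 1
  -- conditional independence consequences
  have key1 : P[fun ω => A ω * Y1 ω | MeasurableSpace.comap X inferInstance] =ᵐ[P] fun ω => (P[A | MeasurableSpace.comap X inferInstance]) ω * (P[Y1 | MeasurableSpace.comap X inferInstance]) ω :=
    condexp_mul_ae_of_condIndepFun hm hA hY1meas hA1 hY1abs hexch1.symm
  have key0 : P[fun ω => A ω * Y0 ω | MeasurableSpace.comap X inferInstance] =ᵐ[P] fun ω => (P[A | MeasurableSpace.comap X inferInstance]) ω * (P[Y0 | MeasurableSpace.comap X inferInstance]) ω :=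
    condexp_mul_ae_of_condIndepFun hm hA hY0meas hA1 hY0abs hexch0.symm
  -- identification of g1 and g0
  have hg1_eq : g1 =ᵐ[P] fun ω => π ω * (P[Y1 | MeasurableSpace.comap X inferInstance]) ω := by
    have hAY : (fun ω => A ω * Y ω) = fun ω => A ω * Y1 ω := by
      funext ω; rcases hA01 ω with h | h <;> simp [hY ω, h]
    calc g1 =ᵐ[P] P[fun ω => A ω * Y ω | MeasurableSpace.comap X inferInstance] := hg1ver
      _ = P[fun ω => A ω * Y1 ω | MeasurableSpace.comap X inferInstance] := by rw [hAY]
      _ =ᵐ[P] fun ω => (P[A | MeasurableSpace.comap X inferInstance]) ω * (P[Y1 | MeasurableSpace.comap X inferInstance]) ω := key1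
      _ =ᵐ[P] fun ω => π ω * (P[Y1 | MeasurableSpace.comap X inferInstance]) ω := by
          filter_upwards [hπver] with ω hω; rw [← hω]
  have hg0_eq : g0 =ᵐ[P] fun ω => (1 - π ω) * (P[Y0 | MeasurableSpace.comap X inferInstance]) ω := by
    have hAY : (fun ω => (1 - A ω) * Y ω) = fun ω => Y0 ω - A ω * Y0 ω := by
      funext ω; rcases hA01 ω with h | h <;> simp [hY ω, h]
    have hsub : P[fun ω => Y0 ω - A ω * Y0 ω | MeasurableSpace.comap X inferInstance]
        =ᵐ[P] P[Y0 | MeasurableSpace.comap X inferInstance] - P[fun ω => A ω * Y0 ω | MeasurableSpace.comap X inferInstance] :=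
      condExp_sub hY0int hAY0int _
    calc g0 =ᵐ[P] P[fun ω => (1 - A ω) * Y ω | MeasurableSpace.comap X inferInstance] := hg0ver
      _ = P[fun ω => Y0 ω - A ω * Y0 ω | MeasurableSpace.comap X inferInstance] := by rw [hAY]
      _ =ᵐ[P] P[Y0 | MeasurableSpace.comap X inferInstance] - P[fun ω => A ω * Y0 ω | MeasurableSpace.comap X inferInstance] := hsub
      _ =ᵐ[P] fun ω => (1 - π ω) * (P[Y0 | MeasurableSpace.comap X inferInstance]) ω := by
          filter_upwards [key0, hπver] with ω h0 hπω
          simp only [Pi.sub_apply, h0, ← hπω]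
          ring
  -- pull-out property
  have hwg : StronglyMeasurable[MeasurableSpace.comap X inferInstance] (fun ω => sg (π ω)) :=
    (hsgmeas.comp hπmeas).stronglyMeasurable
  have hwl : StronglyMeasurable[MeasurableSpace.comap X inferInstance] (fun ω => sl (π ω)) :=
    (hslmeas.comp hπmeas).stronglyMeasurable
  have hpull1 : P[(fun ω => sg (π ω)) * Y1 | MeasurableSpace.comap X inferInstance] =ᵐ[P] (fun ω => sg (π ω)) * P[Y1 | MeasurableSpace.comap X inferInstance] :=
    condExp_mul_of_stronglyMeasurable_left hwg (by exact hB1int) hY1int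
  have hpull0 : P[(fun ω => sl (π ω)) * Y0 | MeasurableSpace.comap X inferInstance] =ᵐ[P] (fun ω => sl (π ω)) * P[Y0 | MeasurableSpace.comap X inferInstance] :=
    condExp_mul_of_stronglyMeasurable_left hwl (by exact hB0int) hY0int
  have int1 : ∫ ω, sg (π ω) * Y1 ω ∂P = ∫ ω, sg (π ω) * (P[Y1 | MeasurableSpace.comap X inferInstance]) ω ∂P := by
    have h := integral_condExp hm (μ := P) (f := (fun ω => sg (π ω)) * Y1)
    rw [show (∫ ω, sg (π ω) * Y1 ω ∂P) = ∫ ω, ((fun ω => sg (π ω)) * Y1) ω ∂P from rfl, ← h,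
      integral_congr_ae hpull1]
    rfl
  have int0 : ∫ ω, sl (π ω) * Y0 ω ∂P = ∫ ω, sl (π ω) * (P[Y0 | MeasurableSpace.comap X inferInstance]) ω ∂P := by
    have h := integral_condExp hm (μ := P) (f := (fun ω => sl (π ω)) * Y0)
    rw [show (∫ ω, sl (π ω) * Y0 ω ∂P) = ∫ ω, ((fun ω => sl (π ω)) * Y0) ω ∂P from rfl, ← h,
      integral_congr_ae hpull0]
    rfl
  -- relating μ1, μ0 to conditional expectations
  have hμ1eq : (fun ω => sg (π ω) * (P[Y1 | MeasurableSpace.comap X inferInstance]) ω) =ᵐ[P] fun ω => μ1 ω * sg (π ω) := by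
    filter_upwards [hg1_eq] with ω hω
    rw [hμ1 ω]
    by_cases hp : 0 < π ω
    · rw [if_pos hp, hω, mul_div_cancel_left₀ _ (ne_of_gt hp), mul_comm]
    · have hπ0 : π ω = 0 := le_antisymm (not_lt.1 hp) (hπb ω).1
      rw [if_neg hp, hπ0, hsg0]; ring
  have hμ0eq : (fun ω => sl (π ω) * (P[Y0 | MeasurableSpace.comap X inferInstance]) ω) =ᵐ[P] fun ω => μ0 ω * sl (π ω) := by
    filter_upwards [hg0_eq] with ω hω
    rw [hμ0 ω]
    by_cases hp : π ω < 1
    · rw [if_pos hp, hω, mul_div_cancel_left₀ _ (by linarith : (1:ℝ) - π ω ≠ 0), mul_comm]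
    · have hπ1 : π ω = 1 := le_antisymm (hπb ω).2 (not_lt.1 hp)
      rw [if_neg hp, hπ1, hsl1]; ring
  -- integrability of the μ terms
  have hμ1sg_int : Integrable (fun ω => μ1 ω * sg (π ω)) P := by
    refine Integrable.congr ?_ hμ1eq
    exact Integrable.bdd_mul integrable_condExp hsgm.aestronglyMeasurable
      (c := 1) (Filter.Eventually.of_forall fun ω => by
        rw [Real.norm_eq_abs, abs_of_nonneg (hsgπ ω).1]; exact (hsgπ ω).2)
  have hμ0sl_int : Integrable (fun ω => μ0 ω * sl (π ω)) P := by
    refine Integrable.congr ?_ hμ0eq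
    exact Integrable.bdd_mul integrable_condExp hslm.aestronglyMeasurable
      (c := 1) (Filter.Eventually.of_forall fun ω => by
        rw [Real.norm_eq_abs, abs_of_nonneg (hslπ ω).1]; exact (hslπ ω).2)
  -- key expression for ψs
  have hψ : ψs = (∫ ω, sg (π ω) * Y1 ω ∂P) - ∫ ω, sl (π ω) * Y0 ω ∂P := by
    rw [hψs, integral_sub hμ1sg_int hμ0sl_int, ← integral_congr_ae hμ1eq,
      ← integral_congr_ae hμ0eq, ← int1, ← int0]
  -- splitting the integrals
  have split1 : ∫ ω, Y1 ω ∂P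
      = (∫ ω, sg (π ω) * Y1 ω ∂P) + ∫ ω, (1 - sg (π ω)) * Y1 ω ∂P := by
    rw [← integral_add hB1int hR1int]
    exact integral_congr_ae (Filter.Eventually.of_forall fun ω => by ring)
  have split0 : ∫ ω, Y0 ω ∂P
      = (∫ ω, sl (π ω) * Y0 ω ∂P) + ∫ ω, (1 - sl (π ω)) * Y0 ω ∂P := by
    rw [← integral_add hB0int hR0int]
    exact integral_congr_ae (Filter.Eventually.of_forall fun ω => by ring)
  -- bounds on the remainder terms
  have hR1_nonneg : 0 ≤ ∫ ω, (1 - sg (π ω)) * Y1 ω ∂P :=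
    integral_nonneg fun ω => mul_nonneg (by linarith [(hsgπ ω).2]) (hY1b ω).1
  have hR0_nonneg : 0 ≤ ∫ ω, (1 - sl (π ω)) * Y0 ω ∂P :=
    integral_nonneg fun ω => mul_nonneg (by linarith [(hslπ ω).2]) (hY0b ω).1
  have hone : ∫ (_ : Ω), (1:ℝ) ∂P = 1 := by simp
  have hR1_le : ∫ ω, (1 - sg (π ω)) * Y1 ω ∂P ≤ 1 - ∫ ω, sg (π ω) ∂P := by
    have h1 : ∫ ω, (1 - sg (π ω)) * Y1 ω ∂P ≤ ∫ ω, (1 - sg (π ω)) ∂P := by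
      refine integral_mono hR1int ((integrable_const 1).sub hsgint) fun ω => ?_
      calc (1 - sg (π ω)) * Y1 ω ≤ (1 - sg (π ω)) * 1 :=
        mul_le_mul_of_nonneg_left (hY1b ω).2 (by linarith [(hsgπ ω).2])
      _ = 1 - sg (π ω) := mul_one _
    rwa [integral_sub (integrable_const 1) hsgint, hone] at h1
  have hR0_le : ∫ ω, (1 - sl (π ω)) * Y0 ω ∂P ≤ 1 - ∫ ω, sl (π ω) ∂P := by
    have h1 : ∫ ω, (1 - sl (π ω)) * Y0 ω ∂P ≤ ∫ ω, (1 - sl (π ω)) ∂P := by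
      refine integral_mono hR0int ((integrable_const 1).sub hslint) fun ω => ?_
      calc (1 - sl (π ω)) * Y0 ω ≤ (1 - sl (π ω)) * 1 :=
        mul_le_mul_of_nonneg_left (hY0b ω).2 (by linarith [(hslπ ω).2])
      _ = 1 - sl (π ω) := mul_one _
    rwa [integral_sub (integrable_const 1) hslint, hone] at h1
  have hdiff : ∫ ω, (Y1 ω - Y0 ω) ∂P = (∫ ω, Y1 ω ∂P) - ∫ ω, Y0 ω ∂P :=
    integral_sub hY1int hY0int
  constructor
  · rw [hLs, hdiff, split1, split0, hψ]
    linarith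
  · rw [hUs, hdiff, split1, split0, hψ]
    linarith
end

section
/- (Second-order remainder bound for the smoothed trimmed-mean functional; Lemma A1.) The remainder R := ∫ [ μ̂·s(π̂) − μ·s(π) − (π̂/π)·s(π)·(μ̂ − μ) − μ·s'(π)·(π̂ − π) ] dQ satisfies |R| ≤ (1/c)·∫ |π̂ − π|·|μ̂ − μ| dQ + M₁·∫ |π̂ − π|·|μ̂ − μ| dQ + (M₂/2)·∫ (π̂ − π)² dQ; that is, R is second-order, depending only on products and squares of the nuisance estimation errors. -/
open MeasureTheory

/-- Taylor bound: if `s'` is `M₂`-Lipschitz-ish (bounded second derivative), then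
the first-order remainder is bounded by `M₂/2 (b-a)²`. -/
lemma taylor2_aux (s s' s'' : ℝ → ℝ) (M₂ : ℝ)
    (hs' : ∀ t, HasDerivAt s (s' t) t)
    (hs'' : ∀ t, HasDerivAt s' (s'' t) t)
    (hs''bdd : ∀ t, |s'' t| ≤ M₂) (a b : ℝ) :
    |s b - s a - s' a * (b - a)| ≤ M₂ / 2 * (b - a) ^ 2 := by
  have hdiff' : Differentiable ℝ s' := fun t => (hs'' t).differentiableAt
  have hcont' : Continuous s' := hdiff'.continuous
  have lip : ∀ x y : ℝ, |s' y - s' x| ≤ M₂ * |y - x| := by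
    intro x y
    have := Convex.norm_image_sub_le_of_norm_hasDerivWithin_le
      (f := s') (f' := s'') (s := Set.univ) (C := M₂)
      (fun t _ => (hs'' t).hasDerivWithinAt)
      (fun t _ => by simpa [Real.norm_eq_abs] using hs''bdd t)
      convex_univ (Set.mem_univ x) (Set.mem_univ y)
    simpa [Real.norm_eq_abs] using this
  have key : s b - s a - s' a * (b - a) = ∫ t in a..b, (s' t - s' a) := by
    have h1 : (∫ t in a..b, s' t) = s b - s a :=
      intervalIntegral.integral_eq_sub_of_hasDerivAt (fun t _ => hs' t)
        (hcont'.intervalIntegrable a b)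
    rw [intervalIntegral.integral_sub (hcont'.intervalIntegrable a b)
      intervalIntegrable_const, h1, intervalIntegral.integral_const]
    simp [smul_eq_mul]; ring
  rw [key]
  have hint1 : IntervalIntegrable (fun t => |s' t - s' a|) volume a b :=
    ((hcont'.sub continuous_const).abs).intervalIntegrable a b
  rcases le_total a b with hab | hab
  · have h2 : |∫ t in a..b, (s' t - s' a)| ≤ ∫ t in a..b, |s' t - s' a| := by
      simpa [Real.norm_eq_abs] using
        intervalIntegral.norm_integral_le_integral_norm (f := fun t => s' t - s' a) hab
    have h3 : (∫ t in a..b, |s' t - s' a|) ≤ ∫ t in a..b, M₂ * (t - a) := by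
      apply intervalIntegral.integral_mono_on hab hint1
        ((Continuous.intervalIntegrable (by continuity) a b))
      intro t ht
      calc |s' t - s' a| ≤ M₂ * |t - a| := lip a t
        _ = M₂ * (t - a) := by rw [abs_of_nonneg (by linarith [ht.1])]
    have h4 : (∫ t in a..b, M₂ * (t - a)) = M₂ / 2 * (b - a) ^ 2 := by
      rw [intervalIntegral.integral_const_mul, intervalIntegral.integral_sub
        intervalIntegral.intervalIntegrable_id intervalIntegrable_const,
        integral_id, intervalIntegral.integral_const]
      simp [smul_eq_mul]; ring
    linarith
  · have h2 : |∫ t in a..b, (s' t - s' a)| ≤ ∫ t in b..a, |s' t - s' a| := by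
      rw [intervalIntegral.integral_symm b a, abs_neg]
      simpa [Real.norm_eq_abs] using
        intervalIntegral.norm_integral_le_integral_norm (f := fun t => s' t - s' a) hab
    have h3 : (∫ t in b..a, |s' t - s' a|) ≤ ∫ t in b..a, M₂ * (a - t) := by
      apply intervalIntegral.integral_mono_on hab hint1.symm
        ((Continuous.intervalIntegrable (by continuity) b a))
      intro t ht
      calc |s' t - s' a| ≤ M₂ * |t - a| := lip a t
        _ = M₂ * (a - t) := by rw [abs_of_nonpos (by linarith [ht.2])]; ring
    have h4 : (∫ t in b..a, M₂ * (a - t)) = M₂ / 2 * (b - a) ^ 2 := by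
      rw [intervalIntegral.integral_const_mul, intervalIntegral.integral_sub
        intervalIntegrable_const intervalIntegral.intervalIntegrable_id,
        integral_id, intervalIntegral.integral_const]
      simp [smul_eq_mul]; ring
    linarith

/-- **Second-order remainder bound for the smoothed trimmed-mean functional
(Lemma A1).** The von Mises remainder
`R = ∫ [μ̂·s(π̂) − μ·s(π) − (π̂/π)·s(π)·(μ̂ − μ) − μ·s'(π)·(π̂ − π)] dQ`
is second-order: `|R| ≤ (1/c)·∫ |π̂−π|·|μ̂−μ| dQ + M₁·∫ |π̂−π|·|μ̂−μ| dQ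
+ (M₂/2)·∫ (π̂−π)² dQ`. -/
theorem second_order_remainder_trimmed_mean
    {𝒳 : Type*} [MeasurableSpace 𝒳] (Q : Measure 𝒳) [IsProbabilityMeasure Q]
    (c : ℝ) (hc : 0 < c) (M₁ M₂ : ℝ) (hM₁ : 0 ≤ M₁) (hM₂ : 0 ≤ M₂)
    (s s' s'' : ℝ → ℝ)
    (hsb : ∀ t, s t ∈ Set.Icc (0 : ℝ) 1)
    (hs' : ∀ t, HasDerivAt s (s' t) t)
    (hs'' : ∀ t, HasDerivAt s' (s'' t) t)
    (hs'bdd : ∀ t, |s' t| ≤ M₁) (hs''bdd : ∀ t, |s'' t| ≤ M₂)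
    (hszero : ∀ x, x ≤ c → s x = 0)
    (μ μhat π πhat : 𝒳 → ℝ)
    (hμmeas : Measurable μ) (hμhatmeas : Measurable μhat)
    (hπmeas : Measurable π) (hπhatmeas : Measurable πhat)
    (hμb : ∀ x, μ x ∈ Set.Icc (0 : ℝ) 1) (hμhatb : ∀ x, μhat x ∈ Set.Icc (0 : ℝ) 1)
    (hπb : ∀ x, π x ∈ Set.Ioc (0 : ℝ) 1) (hπhatb : ∀ x, πhat x ∈ Set.Ioc (0 : ℝ) 1)
    (R : ℝ)
    (hR : R = ∫ x, (μhat x * s (πhat x) - μ x * s (π x)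
        - (πhat x / π x) * s (π x) * (μhat x - μ x)
        - μ x * s' (π x) * (πhat x - π x)) ∂Q) :
    |R| ≤ (1 / c) * ∫ x, |πhat x - π x| * |μhat x - μ x| ∂Q
        + M₁ * ∫ x, |πhat x - π x| * |μhat x - μ x| ∂Q
        + M₂ / 2 * ∫ x, (πhat x - π x) ^ 2 ∂Q := by
  have hSdiff : Differentiable ℝ s := fun t => (hs' t).differentiableAt
  have hScont : Continuous s := hSdiff.continuous
  have hS'diff : Differentiable ℝ s' := fun t => (hs'' t).differentiableAt
  have hS'cont : Continuous s' := hS'diff.continuous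
  -- Lipschitz bound for s
  have lip1 : ∀ x y : ℝ, |s y - s x| ≤ M₁ * |y - x| := by
    intro x y
    have := Convex.norm_image_sub_le_of_norm_hasDerivWithin_le
      (f := s) (f' := s') (s := Set.univ) (C := M₁)
      (fun t _ => (hs' t).hasDerivWithinAt)
      (fun t _ => by simpa [Real.norm_eq_abs] using hs'bdd t)
      convex_univ (Set.mem_univ x) (Set.mem_univ y)
    simpa [Real.norm_eq_abs] using this
  -- bound on s(p)/p
  have sdivc : ∀ p : ℝ, p ∈ Set.Ioc (0:ℝ) 1 → |s p / p| ≤ 1 / c := by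
    intro p hp
    rcases le_or_gt p c with h | h
    · rw [hszero p h]; simp; positivity
    · rw [abs_of_nonneg (div_nonneg (hsb p).1 hp.1.le)]
      exact div_le_div₀ zero_le_one (hsb p).2 hc h.le
  set f : 𝒳 → ℝ := fun x => μhat x * s (πhat x) - μ x * s (π x)
        - (πhat x / π x) * s (π x) * (μhat x - μ x)
        - μ x * s' (π x) * (πhat x - π x) with hf
  set h : 𝒳 → ℝ := fun x => |πhat x - π x| * |μhat x - μ x| with hhdef
  set q : 𝒳 → ℝ := fun x => (πhat x - π x) ^ 2 with hqdef
  set g : 𝒳 → ℝ := fun x => (1/c) * h x + M₁ * h x + M₂/2 * q x with hgdef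
  -- pointwise bound
  have hpt : ∀ x, |f x| ≤ g x := by
    intro x
    have ha := hπb x
    have hb := hπhatb x
    have hu := hμb x
    have hane : π x ≠ 0 := ne_of_gt ha.1
    have hid : f x = (μhat x - μ x) * ((s (πhat x) - s (π x))
        - (s (π x) / π x) * (πhat x - π x))
        + μ x * (s (πhat x) - s (π x) - s' (π x) * (πhat x - π x)) := by
      simp only [hf]; field_simp; ring
    rw [hid]
    have t1 : |s (πhat x) - s (π x)| ≤ M₁ * |πhat x - π x| := lip1 _ _
    have t2 : |s (π x) / π x| ≤ 1 / c := sdivc _ ha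
    have t3 : |s (πhat x) - s (π x) - s' (π x) * (πhat x - π x)|
        ≤ M₂ / 2 * (πhat x - π x) ^ 2 :=
      taylor2_aux s s' s'' M₂ hs' hs'' hs''bdd (π x) (πhat x)
    calc |(μhat x - μ x) * ((s (πhat x) - s (π x)) - (s (π x) / π x) * (πhat x - π x))
        + μ x * (s (πhat x) - s (π x) - s' (π x) * (πhat x - π x))|
        ≤ |μhat x - μ x| * (|s (πhat x) - s (π x)| + |s (π x) / π x| * |πhat x - π x|)
          + |μ x| * |s (πhat x) - s (π x) - s' (π x) * (πhat x - π x)| := by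
          refine (abs_add_le _ _).trans ?_
          gcongr
          · rw [abs_mul]
            gcongr
            exact (abs_sub _ _).trans (by rw [abs_mul])
          · rw [abs_mul]
      _ ≤ |μhat x - μ x| * (M₁ * |πhat x - π x| + (1/c) * |πhat x - π x|)
          + 1 * (M₂ / 2 * (πhat x - π x) ^ 2) := by
          gcongr
          rw [abs_of_nonneg hu.1]; exact hu.2
      _ ≤ g x := by
          simp only [hgdef, hhdef, hqdef]
          have : |μhat x - μ x| * (M₁ * |πhat x - π x| + 1/c * |πhat x - π x|)
              = 1/c * (|πhat x - π x| * |μhat x - μ x|)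
              + M₁ * (|πhat x - π x| * |μhat x - μ x|) := by ring
          rw [this]; linarith
  -- measurability and integrability
  have hfmeas : Measurable f := by
    have m1 : Measurable fun x => s (πhat x) := hScont.measurable.comp hπhatmeas
    have m2 : Measurable fun x => s (π x) := hScont.measurable.comp hπmeas
    have m3 : Measurable fun x => s' (π x) := hS'cont.measurable.comp hπmeas
    exact (((hμhatmeas.mul m1).sub (hμmeas.mul m2)).sub
      (((hπhatmeas.div hπmeas).mul m2).mul (hμhatmeas.sub hμmeas))).sub
      ((hμmeas.mul m3).mul (hπhatmeas.sub hπmeas))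
  have hhmeas : Measurable h := ((hπhatmeas.sub hπmeas).abs).mul
    ((hμhatmeas.sub hμmeas).abs)
  have hqmeas : Measurable q := (hπhatmeas.sub hπmeas).pow_const 2
  have habs1 : ∀ x, |πhat x - π x| ≤ 1 := by
    intro x; rw [abs_sub_le_iff]
    constructor <;> [linarith [(hπhatb x).2, (hπb x).1]; linarith [(hπb x).2, (hπhatb x).1]]
  have habs2 : ∀ x, |μhat x - μ x| ≤ 1 := by
    intro x; rw [abs_sub_le_iff]
    constructor <;> [linarith [(hμhatb x).2, (hμb x).1]; linarith [(hμb x).2, (hμhatb x).1]]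
  have hhint : Integrable h Q := by
    refine Integrable.mono' (integrable_const 1) hhmeas.aestronglyMeasurable ?_
    filter_upwards with x
    rw [Real.norm_eq_abs, abs_of_nonneg (mul_nonneg (abs_nonneg _) (abs_nonneg _))]
    exact mul_le_one₀ (habs1 x) (abs_nonneg _) (habs2 x)
  have hqint : Integrable q Q := by
    refine Integrable.mono' (integrable_const 1) hqmeas.aestronglyMeasurable ?_
    filter_upwards with x
    rw [Real.norm_eq_abs, abs_of_nonneg (sq_nonneg _)]
    calc (πhat x - π x) ^ 2 = |πhat x - π x| ^ 2 := (sq_abs _).symm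
      _ ≤ 1 := pow_le_one₀ (abs_nonneg _) (habs1 x)
  have hgint : Integrable g Q :=
    ((hhint.const_mul (1/c)).add (hhint.const_mul M₁)).add (hqint.const_mul (M₂/2))
  have hfint : Integrable f Q := by
    refine Integrable.mono' hgint hfmeas.aestronglyMeasurable ?_
    filter_upwards with x
    rw [Real.norm_eq_abs]; exact hpt x
  rw [hR]
  calc |∫ x, f x ∂Q| ≤ ∫ x, |f x| ∂Q := by
        simpa [Real.norm_eq_abs] using norm_integral_le_integral_norm (μ := Q) f
    _ ≤ ∫ x, g x ∂Q := integral_mono hfint.abs hgint hpt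
    _ = (1/c) * ∫ x, h x ∂Q + M₁ * ∫ x, h x ∂Q + M₂/2 * ∫ x, q x ∂Q := by
        have i1 : Integrable (fun x => 1/c * h x) Q := hhint.const_mul _
        have i2 : Integrable (fun x => M₁ * h x) Q := hhint.const_mul _
        have i3 : Integrable (fun x => M₂/2 * q x) Q := hqint.const_mul _
        have i12 : Integrable (fun x => 1/c * h x + M₁ * h x) Q := i1.add i2
        simp only [hgdef]
        rw [integral_add i12 i3, integral_add i1 i2,
          integral_const_mul, integral_const_mul, integral_const_mul]
end
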